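/- Let β > 0, let Σ ⊆ ℝ³ be a measurable set of finite positive measure contained in the closed ball of center x₀ and radius R > 0, and let E, B : ℝ³ → ℝ³ be measurable vector fields with ‖E(x)‖ ≤ β, ‖B(x)‖ ≤ β and U(E(x),B(x)) > 0 for all x ∈ Σ, with u_BI(E(·),B(·)) and U^{-1/2}(E × B) integrable on Σ. Fix a unit vector k ∈ ℝ³. If equality holds in the quasi-local inequality, i.e. ∫_Σ u_BI(E(x),B(x)) dx = (1/R) · | ∫_Σ U(E(x),B(x))^{-1/2} ⟨(x − x₀) × (E(x) × B(x)), k⟩ dx |, then E(x) = 0 and B(x) = 0 for almost every x ∈ Σ. -/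

import Mathlib

open MeasureTheory Real Filter
open scoped RealInnerProductSpace

noncomputable section

/-- Three-dimensional Euclidean space. -/
abbrev E3 := EuclideanSpace ℝ (Fin 3)

/-- Cross product on `ℝ³`. -/
def cross3 (a b : E3) : E3 :=
  WithLp.toLp 2 ![a 1 * b 2 - a 2 * b 1, a 2 * b 0 - a 0 * b 2, a 0 * b 1 - a 1 * b 0]

/-- The Born–Infeld function `U(E,B) = 1 + ‖B‖²/β² − ‖E‖²/β² − (E⋅B)²/β⁴`. -/
def Ubi (β : ℝ) (E B : E3) : ℝ :=
  1 + ‖B‖ ^ 2 / β ^ 2 - ‖E‖ ^ 2 / β ^ 2 - ⟪E, B⟫ ^ 2 / β ^ 4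

/-- The Born–Infeld energy density `u_BI(E,B) = (β²/√U)(1 + ‖B‖²/β² − √U)`. -/
def uBI (β : ℝ) (E B : E3) : ℝ :=
  β ^ 2 / Real.sqrt (Ubi β E B) * (1 + ‖B‖ ^ 2 / β ^ 2 - Real.sqrt (Ubi β E B))

/-!
Writing `c = ‖E × B‖`, the identity `β⁴ U = (β² − ‖E‖²)(β² + ‖B‖²) + c²` together with
`2c ≤ ‖E‖² + ‖B‖²` gives the pointwise bound `c ≤ √U · u_BI`. Hence the angular momentum
density is bounded by `‖x − x₀‖ · u_BI ≤ R · u_BI`, and equality of the integrals forces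
equality almost everywhere. Off the null sphere `‖x − x₀‖ = R` this is only possible where
`u_BI = 0`, and `u_BI` vanishes only at `E = B = 0`.
-/

open Matrix in
theorem cross3_eq_crossProduct (a b : E3) : cross3 a b = WithLp.toLp 2 (a.ofLp ⨯₃ b.ofLp) := by
  rw [cross_apply]; rfl

open Matrix in
theorem norm_cross3_sq (a b : E3) : ‖cross3 a b‖ ^ 2 = ‖a‖ ^ 2 * ‖b‖ ^ 2 - ⟪a, b⟫ ^ 2 := by
  simp only [← real_inner_self_eq_norm_sq, EuclideanSpace.inner_eq_star_dotProduct, star_trivial,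
    cross3_eq_crossProduct, cross_dot_cross, dotProduct_comm a.ofLp]
  ring

theorem norm_cross3_le (a b : E3) : ‖cross3 a b‖ ≤ ‖a‖ * ‖b‖ :=
  pow_le_pow_iff_left₀ (norm_nonneg _) (by positivity) two_ne_zero |>.mp <| by
    rw [mul_pow, norm_cross3_sq]; nlinarith [sq_nonneg ⟪a, b⟫]

theorem abs_inner_cross3_le (v w k : E3) : |⟪cross3 v w, k⟫| ≤ ‖v‖ * ‖k‖ * ‖w‖ :=
  calc |⟪cross3 v w, k⟫| ≤ ‖cross3 v w‖ * ‖k‖ := abs_real_inner_le_norm _ _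
    _ ≤ ‖v‖ * ‖w‖ * ‖k‖ := by gcongr; exact norm_cross3_le v w
    _ = ‖v‖ * ‖k‖ * ‖w‖ := by ring

theorem pow_four_mul_Ubi {β : ℝ} (hβ : β ≠ 0) (E B : E3) :
    β ^ 4 * Ubi β E B = (β ^ 2 - ‖E‖ ^ 2) * (β ^ 2 + ‖B‖ ^ 2) + ‖cross3 E B‖ ^ 2 := by
  rw [Ubi, norm_cross3_sq]
  field_simp
  ring

/-- The integrand of `J_BI` at the displacement `v = x - x₀`. -/
def jBI (β : ℝ) (v k E B : E3) : ℝ :=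
  (√(Ubi β E B))⁻¹ * ⟪cross3 v (cross3 E B), k⟫

section BornInfeld

variable {β : ℝ} {E B : E3}

theorem sqrt_Ubi_mul_uBI (hβ : β ≠ 0) (hU : 0 < Ubi β E B) :
    √(Ubi β E B) * uBI β E B = β ^ 2 + ‖B‖ ^ 2 - β ^ 2 * √(Ubi β E B) := by
  have : √(Ubi β E B) ≠ 0 := (Real.sqrt_pos.mpr hU).ne'
  rw [uBI]
  field_simp

theorem norm_cross3_le_sqrt_Ubi_mul_uBI (hβ : β ≠ 0) (hU : 0 < Ubi β E B) :
    ‖cross3 E B‖ ≤ √(Ubi β E B) * uBI β E B := by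
  rw [sqrt_Ubi_mul_uBI hβ hU]
  set e := ‖E‖
  set b := ‖B‖
  set c := ‖cross3 E B‖
  have hc : c ≤ e * b := norm_cross3_le E B
  have hc₀ : 0 ≤ c := norm_nonneg _
  have hβ₀ : 0 < β ^ 2 := by positivity
  have hβ₄ : β ^ 4 * Ubi β E B = (β ^ 2 - e ^ 2) * (β ^ 2 + b ^ 2) + c ^ 2 :=
    pow_four_mul_Ubi hβ E B
  -- `c ≤ e b` turns `0 < β⁴ U` into `0 < β² (β² + b² − e²)`
  have he : e ^ 2 < β ^ 2 + b ^ 2 := by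
    have : 0 < β ^ 4 * Ubi β E B := by positivity
    nlinarith [mul_le_mul hc hc hc₀ (by positivity)]
  have hcb : c ≤ β ^ 2 + b ^ 2 := by
    refine pow_le_pow_iff_left₀ hc₀ (by positivity) two_ne_zero |>.mp ?_
    nlinarith [mul_le_mul hc hc hc₀ (by positivity), sq_nonneg b]
  have hsqrt : β ^ 2 * √(Ubi β E B) = √(β ^ 4 * Ubi β E B) := by
    rw [Real.sqrt_mul (by positivity), show β ^ 4 = (β ^ 2) ^ 2 by ring, Real.sqrt_sq hβ₀.le]
  suffices √(β ^ 4 * Ubi β E B) ≤ β ^ 2 + b ^ 2 - c by linarith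
  refine Real.sqrt_le_iff.mpr ⟨by linarith, ?_⟩
  rw [hβ₄]
  nlinarith [mul_nonneg (by positivity : (0 : ℝ) ≤ β ^ 2 + b ^ 2) (sq_nonneg (e - b))]

theorem uBI_nonneg (hβ : β ≠ 0) (hU : 0 < Ubi β E B) : 0 ≤ uBI β E B :=
  nonneg_of_mul_nonneg_right
    ((norm_nonneg _).trans (norm_cross3_le_sqrt_Ubi_mul_uBI hβ hU)) (Real.sqrt_pos.mpr hU)

theorem eq_zero_of_uBI_eq_zero (hβ : β ≠ 0) (hU : 0 < Ubi β E B) (hu : uBI β E B = 0) :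
    E = 0 ∧ B = 0 := by
  have hc : ‖cross3 E B‖ = 0 :=
    le_antisymm (by simpa [hu] using norm_cross3_le_sqrt_Ubi_mul_uBI hβ hU) (norm_nonneg _)
  have hs : β ^ 2 * √(Ubi β E B) = β ^ 2 + ‖B‖ ^ 2 := by
    linarith [sqrt_Ubi_mul_uBI hβ hU, show √(Ubi β E B) * uBI β E B = 0 by rw [hu, mul_zero]]
  have hprod : (β ^ 2 + ‖B‖ ^ 2) * (‖E‖ ^ 2 + ‖B‖ ^ 2) = 0 := by
    have hsq : (β ^ 2 * √(Ubi β E B)) ^ 2 = β ^ 4 * Ubi β E B := by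
      rw [mul_pow, Real.sq_sqrt hU.le]; ring
    linear_combination pow_four_mul_Ubi hβ E B + hsq
      - (β ^ 2 * √(Ubi β E B) + β ^ 2 + ‖B‖ ^ 2) * hs + hc * ‖cross3 E B‖
  have hsum : ‖E‖ ^ 2 + ‖B‖ ^ 2 = 0 := (mul_eq_zero.mp hprod).resolve_left (by positivity)
  exact ⟨norm_eq_zero.mp (by nlinarith [norm_nonneg E, sq_nonneg ‖B‖]),
    norm_eq_zero.mp (by nlinarith [norm_nonneg B, sq_nonneg ‖E‖])⟩

theorem abs_jBI_le (hβ : β ≠ 0) (hU : 0 < Ubi β E B) (v k : E3) :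
    |jBI β v k E B| ≤ ‖v‖ * ‖k‖ * uBI β E B := by
  have hs : 0 < √(Ubi β E B) := Real.sqrt_pos.mpr hU
  calc |jBI β v k E B| = |⟪cross3 v (cross3 E B), k⟫| / √(Ubi β E B) := by
        rw [jBI, abs_mul, abs_inv, abs_of_pos hs, inv_mul_eq_div]
    _ ≤ ‖v‖ * ‖k‖ * ‖cross3 E B‖ / √(Ubi β E B) := by
        gcongr; exact abs_inner_cross3_le _ _ _
    _ ≤ ‖v‖ * ‖k‖ * (√(Ubi β E B) * uBI β E B) / √(Ubi β E B) := by
        gcongr; exact norm_cross3_le_sqrt_Ubi_mul_uBI hβ hU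
    _ = ‖v‖ * ‖k‖ * uBI β E B := by field_simp

theorem eq_zero_of_mul_uBI_le_abs_jBI (hβ : β ≠ 0) (hU : 0 < Ubi β E B) {v k : E3} {R : ℝ}
    (hv : ‖v‖ * ‖k‖ < R) (h : R * uBI β E B ≤ |jBI β v k E B|) : E = 0 ∧ B = 0 := by
  refine eq_zero_of_uBI_eq_zero hβ hU (le_antisymm ?_ (uBI_nonneg hβ hU))
  by_contra! hu
  linarith [abs_jBI_le hβ hU v k, mul_lt_mul_of_pos_right hv hu]

theorem measurable_jBI {α : Type*} [MeasurableSpace α] {v E B : α → E3}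
    (hv : Measurable v) (hE : Measurable E) (hB : Measurable B) (k : E3) :
    Measurable fun x => jBI β (v x) k (E x) (B x) := by
  unfold jBI Ubi cross3
  fun_prop

end BornInfeld

theorem ae_eq_abs_of_integral_le_abs_integral {α : Type*} [MeasurableSpace α] {μ : Measure α}
    {f g : α → ℝ} (hf : Integrable f μ) (hg : AEStronglyMeasurable g μ)
    (hgf : ∀ᵐ x ∂μ, |g x| ≤ f x) (h : ∫ x, f x ∂μ ≤ |∫ x, g x ∂μ|) :
    f =ᵐ[μ] fun x => |g x| := by
  have hg_int : Integrable g μ := hf.mono' hg (by simpa only [Real.norm_eq_abs] using hgf)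
  have hnonneg : 0 ≤ᵐ[μ] fun x => f x - |g x| := by
    filter_upwards [hgf] with x hx using sub_nonneg.mpr hx
  have hzero : ∫ x, (f x - |g x|) ∂μ = 0 := by
    refine le_antisymm ?_ (integral_nonneg_of_ae hnonneg)
    rw [integral_sub hf hg_int.abs]
    linarith [abs_integral_le_integral_abs (f := g) (μ := μ)]
  filter_upwards [(integral_eq_zero_iff_of_nonneg_ae hnonneg (hf.sub hg_int.abs)).mp hzero]
    with x hx using sub_eq_zero.mp hx

theorem bornInfeld_quasilocal_equality_rigidity_general
    (β : ℝ) (hβ : 0 < β)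
    (S : Set E3) (hSm : MeasurableSet S)
    (x₀ : E3) (R : ℝ) (hR : 0 < R) (hball : S ⊆ Metric.closedBall x₀ R)
    (E B : E3 → E3) (hEm : Measurable E) (hBm : Measurable B)
    (hU : ∀ x ∈ S, 0 < Ubi β (E x) (B x))
    (hu_int : IntegrableOn (fun x => uBI β (E x) (B x)) S)
    (k : E3) (hk : ‖k‖ = 1)
    (heq : ∫ x in S, uBI β (E x) (B x) =
      (1 / R) * |∫ x in S, (Real.sqrt (Ubi β (E x) (B x)))⁻¹ *
        ⟪cross3 (x - x₀) (cross3 (E x) (B x)), k⟫|) :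
    ∀ᵐ x ∂(volume.restrict S), E x = 0 ∧ B x = 0 := by
  have hdist : ∀ x ∈ S, ‖x - x₀‖ * ‖k‖ ≤ R := fun x hx => by
    simpa [hk, dist_eq_norm] using hball hx
  have hbound : ∀ᵐ x ∂(volume.restrict S),
      |jBI β (x - x₀) k (E x) (B x)| ≤ R * uBI β (E x) (B x) := by
    filter_upwards [ae_restrict_mem hSm] with x hx
    exact (abs_jBI_le hβ.ne' (hU x hx) _ k).trans
      (mul_le_mul_of_nonneg_right (hdist x hx) (uBI_nonneg hβ.ne' (hU x hx)))
  have hsat : (fun x => R * uBI β (E x) (B x)) =ᵐ[volume.restrict S]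
      fun x => |jBI β (x - x₀) k (E x) (B x)| := by
    refine ae_eq_abs_of_integral_le_abs_integral (hu_int.const_mul R)
      (measurable_jBI (measurable_id.sub_const x₀) hEm hBm k).aestronglyMeasurable hbound ?_
    rw [integral_const_mul, heq, one_div, mul_inv_cancel_left₀ hR.ne']
    rfl
  have hsphere : ∀ᵐ x ∂(volume.restrict S), x ∉ Metric.sphere x₀ R :=
    ae_restrict_of_ae (measure_eq_zero_iff_ae_notMem.mp (Measure.addHaar_sphere volume x₀ R))
  filter_upwards [hsat, ae_restrict_mem hSm, hsphere] with x hx hxS hxR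
  refine eq_zero_of_mul_uBI_le_abs_jBI hβ.ne' (hU x hxS) ?_ hx.le
  refine (hdist x hxS).lt_of_ne fun h => hxR ?_
  simpa [hk, dist_eq_norm] using h

/-- **Rigidity in the quasi-local energy–angular momentum inequality for Born–Infeld.**
If the region `S` has finite positive measure and equality holds between the
Born–Infeld energy of `S` and `(1/R)` times the absolute value of its angular momentum
about `x₀` along the unit axis `k`, then the fields `E` and `B` vanish almost
everywhere on `S`. -/
theorem bornInfeld_quasilocal_equality_rigidity
    (β : ℝ) (hβ : 0 < β)
    (S : Set E3) (hSm : MeasurableSet S)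
    (hSpos : 0 < volume S) (hSfin : volume S < ⊤)
    (x₀ : E3) (R : ℝ) (hR : 0 < R) (hball : S ⊆ Metric.closedBall x₀ R)
    (E B : E3 → E3) (hEm : Measurable E) (hBm : Measurable B)
    (hEle : ∀ x ∈ S, ‖E x‖ ≤ β) (hBle : ∀ x ∈ S, ‖B x‖ ≤ β)
    (hU : ∀ x ∈ S, 0 < Ubi β (E x) (B x))
    (hu_int : IntegrableOn (fun x => uBI β (E x) (B x)) S)
    (hJ_int : IntegrableOn
      (fun x => (Real.sqrt (Ubi β (E x) (B x)))⁻¹ • cross3 (E x) (B x)) S)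
    (k : E3) (hk : ‖k‖ = 1)
    (heq : ∫ x in S, uBI β (E x) (B x) =
      (1 / R) * |∫ x in S, (Real.sqrt (Ubi β (E x) (B x)))⁻¹ *
        ⟪cross3 (x - x₀) (cross3 (E x) (B x)), k⟫|) :
    ∀ᵐ x ∂(volume.restrict S), E x = 0 ∧ B x = 0 :=
  bornInfeld_quasilocal_equality_rigidity_general β hβ S hSm x₀ R hR hball E B hEm hBm hU hu_int k
    hk heq

end
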